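/- Let (D_k, d_k) be a Hilbert complex: D_k are domains of closed operators d_k : D_k ⊆ H_k → H_{k+1} with range(d_k) ⊆ D_{k+1} and d_{k+1} ∘ d_k = 0. If each d_k has closed range and finite dimensional cohomology ker(d_k)/range(d_{k-1}), then there is an orthogonal (Kodaira) decomposition H_k = closure(range(d_{k-1})) ⊕ closure(range(d_k*)) ⊕ (ker(d_k) ∩ ker(d_{k-1}*)), and the third summand is isomorphic to the k-th cohomology of the complex. -/

import Mathlib

/-!
Put `R = range d₀` and `K = ker d₁`: both are closed (the first by assumption, the second
because `d₁` is), and `R ≤ K` since `d₁ ∘ d₀ = 0`. Density of the domains gives `ker d₀* = Rᗮ`,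
and closedness of `d₁` gives `closure (range d₁*) = Kᗮ`. The decomposition is then the
orthogonal splitting `K = R ⊕ (K ⊓ Rᗮ)` followed by `H₁ = K ⊕ Kᗮ`, and `K ⊓ Rᗮ`, a complement
of `R` in `K`, is isomorphic to `K ⧸ R`.
-/

open Submodule LinearPMap

namespace Submodule

variable {𝕜 E : Type*} [RCLike 𝕜] [NormedAddCommGroup E] [InnerProductSpace 𝕜 E]
  {R K : Submodule 𝕜 E}

theorem sup_orthogonal_sup_inf_orthogonal (h : R ≤ K) [R.HasOrthogonalProjection]
    [K.HasOrthogonalProjection] : R ⊔ Kᗮ ⊔ (K ⊓ Rᗮ) = ⊤ := by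
  rw [sup_right_comm, inf_comm, sup_orthogonal_inf_of_hasOrthogonalProjection h,
    sup_orthogonal_of_hasOrthogonalProjection]

noncomputable def quotientEquivInfOrthogonal (h : R ≤ K) [R.HasOrthogonalProjection] :
    (K ⧸ R.comap K.subtype) ≃ₗ[𝕜] ↥(K ⊓ Rᗮ) :=
  have hcompl := isCompl_comap_subtype_of_isCompl_of_le R.isCompl_orthogonal h
  have hcomap : Rᗮ.comap K.subtype = (K ⊓ Rᗮ).comap K.subtype := by
    rw [comap_inf, comap_subtype_self, top_inf_eq]
  (quotientEquivOfIsCompl _ _ hcompl).trans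
    ((LinearEquiv.ofEq _ _ hcomap).trans (comapSubtypeEquivOfLe inf_le_left))

end Submodule

namespace LinearPMap

section Algebra

variable {A E F G : Type*} [Ring A] [AddCommGroup E] [Module A E] [AddCommGroup F] [Module A F]
  [AddCommGroup G] [Module A G]

theorem mem_map_ker_iff_mem_graph (T : E →ₗ.[A] F) (x : E) :
    x ∈ (LinearMap.ker T.toFun).map T.domain.subtype ↔ (x, 0) ∈ T.graph := by
  simp [mem_graph_iff, and_comm]

theorem range_le_map_ker_of_comp_eq_zero (S : E →ₗ.[A] F) (T : F →ₗ.[A] G)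
    (hmem : ∀ x : S.domain, S x ∈ T.domain) (hcomp : ∀ x : S.domain, T ⟨S x, hmem x⟩ = 0) :
    LinearMap.range S.toFun ≤ (LinearMap.ker T.toFun).map T.domain.subtype := by
  rintro _ ⟨x, rfl⟩
  exact ⟨⟨S x, hmem x⟩, hcomp x, rfl⟩

end Algebra

variable {𝕜 E F : Type*} [RCLike 𝕜] [NormedAddCommGroup E] [InnerProductSpace 𝕜 E]
  [NormedAddCommGroup F] [InnerProductSpace 𝕜 F] {T : E →ₗ.[𝕜] F}

theorem isClosed_map_ker (hT : T.IsClosed) :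
    _root_.IsClosed (((LinearMap.ker T.toFun).map T.domain.subtype : Submodule 𝕜 E) : Set E) := by
  have hker : ((LinearMap.ker T.toFun).map T.domain.subtype : Set E) =
      (fun x ↦ (x, (0 : F))) ⁻¹' T.graph := by
    ext x
    exact mem_map_ker_iff_mem_graph T x
  rw [hker]
  exact hT.preimage (continuous_id.prodMk continuous_const)

variable [CompleteSpace E]

theorem map_ker_adjoint_eq_orthogonal_range (hT : Dense (T.domain : Set E)) :
    (LinearMap.ker T†.toFun).map T†.domain.subtype = (LinearMap.range T.toFun)ᗮ := by
  ext y
  rw [mem_map_ker_iff_mem_graph, adjoint_graph_eq_graph_adjoint hT, mem_adjoint_iff,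
    mem_orthogonal]
  constructor
  · rintro h _ ⟨x, rfl⟩
    simpa using h x (T x) (T.mem_graph x)
  · intro h a b hab
    obtain ⟨x, rfl, rfl⟩ := (mem_graph_iff T).mp hab
    simpa using h _ ⟨x, rfl⟩

theorem range_adjoint_le_orthogonal_map_ker (hT : Dense (T.domain : Set E)) :
    LinearMap.range T†.toFun ≤ ((LinearMap.ker T.toFun).map T.domain.subtype)ᗮ := by
  rintro _ ⟨y, rfl⟩
  rw [mem_orthogonal']
  rintro _ ⟨x, hx, rfl⟩
  change inner 𝕜 (T† y) (x : E) = 0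
  rw [adjoint_isFormalAdjoint hT y x, show T x = 0 from hx, inner_zero_right]

theorem mem_graph_adjoint_of_mem_orthogonal_graph (hT : Dense (T.domain : Set E))
    {w : WithLp 2 (E × F)}
    (hw : w ∈ (T.graph.comap (WithLp.linearEquiv 2 𝕜 (E × F)).toLinearMap)ᗮ) :
    (w.ofLp.2, -w.ofLp.1) ∈ T†.graph := by
  rw [adjoint_graph_eq_graph_adjoint hT, mem_adjoint_iff]
  intro a b hab
  have hw_ab := hw (WithLp.toLp 2 (a, b)) hab
  rw [WithLp.prod_inner_apply] at hw_ab
  simpa [inner_neg_right, add_comm] using hw_ab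

theorem orthogonal_range_adjoint_le_map_ker [CompleteSpace F] (hT : Dense (T.domain : Set E))
    (hc : T.IsClosed) :
    (LinearMap.range T†.toFun)ᗮ ≤ (LinearMap.ker T.toFun).map T.domain.subtype := by
  -- `(z, 0)` is orthogonal to `Gᗮ = {(-T† y, y)}`, hence lies in the closed graph `Gᗮᗮ = G`.
  intro z hz
  set G := T.graph.comap (WithLp.linearEquiv 2 𝕜 (E × F)).toLinearMap
  have hG : _root_.IsClosed (G : Set (WithLp 2 (E × F))) :=
    hc.preimage (WithLp.prod_continuous_ofLp 2 E F)
  have : CompleteSpace G := hG.completeSpace_coe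
  have hzG : WithLp.toLp 2 (z, (0 : F)) ∈ Gᗮᗮ := by
    rw [mem_orthogonal]
    intro w hw
    obtain ⟨y, -, hTy⟩ := (mem_graph_iff _).mp (mem_graph_adjoint_of_mem_orthogonal_graph hT hw)
    have hyz : inner 𝕜 (T† y) z = 0 := (mem_orthogonal _ z).mp hz _ ⟨y, rfl⟩
    rw [hTy, inner_neg_left, neg_eq_zero] at hyz
    simpa [WithLp.prod_inner_apply] using hyz
  rw [orthogonal_orthogonal] at hzG
  exact (mem_map_ker_iff_mem_graph T z).mpr hzG

theorem closure_range_adjoint_eq_orthogonal_map_ker [CompleteSpace F]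
    (hT : Dense (T.domain : Set E)) (hc : T.IsClosed) :
    (LinearMap.range T†.toFun).topologicalClosure =
      ((LinearMap.ker T.toFun).map T.domain.subtype)ᗮ := by
  refine le_antisymm ?_ ?_
  · exact topologicalClosure_minimal _ (range_adjoint_le_orthogonal_map_ker hT)
      (isClosed_orthogonal _)
  · rw [← orthogonal_orthogonal_eq_closure]
    exact orthogonal_le (orthogonal_range_adjoint_le_map_ker hT hc)

end LinearPMap

open ComplexInnerProductSpace in
theorem kodaira_decomposition_general
    {H₀ H₁ H₂ : Type*}
    [NormedAddCommGroup H₀] [InnerProductSpace ℂ H₀] [CompleteSpace H₀]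
    [NormedAddCommGroup H₁] [InnerProductSpace ℂ H₁] [CompleteSpace H₁]
    [NormedAddCommGroup H₂] [InnerProductSpace ℂ H₂] [CompleteSpace H₂]
    (d₀ : H₀ →ₗ.[ℂ] H₁) (d₁ : H₁ →ₗ.[ℂ] H₂)
    (hdense₀ : Dense (d₀.domain : Set H₀)) (hdense₁ : Dense (d₁.domain : Set H₁))
    (hclosed₁ : d₁.IsClosed)
    (hmem : ∀ x : d₀.domain, d₀ x ∈ d₁.domain)
    (hcomplex : ∀ x : d₀.domain, d₁ ⟨d₀ x, hmem x⟩ = 0)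
    (hrange₀ : IsClosed ((LinearMap.range d₀.toFun : Submodule ℂ H₁) : Set H₁)) :
    -- the three summands are pairwise orthogonal:
    (∀ x ∈ (LinearMap.range d₀.toFun).topologicalClosure,
      ∀ y ∈ (LinearMap.range d₁.adjoint.toFun).topologicalClosure, ⟪x, y⟫ = 0) ∧
    (∀ x ∈ (LinearMap.range d₀.toFun).topologicalClosure,
      ∀ y ∈ ((LinearMap.ker d₁.toFun).map d₁.domain.subtype ⊓
              (LinearMap.ker d₀.adjoint.toFun).map d₀.adjoint.domain.subtype :
              Submodule ℂ H₁), ⟪x, y⟫ = 0) ∧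
    (∀ x ∈ (LinearMap.range d₁.adjoint.toFun).topologicalClosure,
      ∀ y ∈ ((LinearMap.ker d₁.toFun).map d₁.domain.subtype ⊓
              (LinearMap.ker d₀.adjoint.toFun).map d₀.adjoint.domain.subtype :
              Submodule ℂ H₁), ⟪x, y⟫ = 0) ∧
    -- they span all of `H₁`:
    ((LinearMap.range d₀.toFun).topologicalClosure ⊔
      (LinearMap.range d₁.adjoint.toFun).topologicalClosure ⊔
      ((LinearMap.ker d₁.toFun).map d₁.domain.subtype ⊓
        (LinearMap.ker d₀.adjoint.toFun).map d₀.adjoint.domain.subtype) = ⊤) ∧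
    -- the harmonic summand is isomorphic to the cohomology `ker d₁ / range d₀`:
    Nonempty
      ((↥((LinearMap.ker d₁.toFun).map d₁.domain.subtype ⊓
          (LinearMap.ker d₀.adjoint.toFun).map d₀.adjoint.domain.subtype)) ≃ₗ[ℂ]
        (↥((LinearMap.ker d₁.toFun).map d₁.domain.subtype) ⧸
          ((LinearMap.range d₀.toFun).comap
            ((LinearMap.ker d₁.toFun).map d₁.domain.subtype).subtype))) := by
  set R := LinearMap.range d₀.toFun
  set K := (LinearMap.ker d₁.toFun).map d₁.domain.subtype
  have hRK : R ≤ K := range_le_map_ker_of_comp_eq_zero d₀ d₁ hmem hcomplex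
  have : CompleteSpace R := hrange₀.completeSpace_coe
  have : CompleteSpace K := (isClosed_map_ker hclosed₁).completeSpace_coe
  rw [hrange₀.submodule_topologicalClosure_eq,
    closure_range_adjoint_eq_orthogonal_map_ker hdense₁ hclosed₁,
    map_ker_adjoint_eq_orthogonal_range hdense₀]
  exact ⟨isOrtho_iff_inner_eq.mp ((isOrtho_orthogonal_right K).mono_left hRK),
    isOrtho_iff_inner_eq.mp ((isOrtho_orthogonal_right R).mono_right inf_le_right),
    isOrtho_iff_inner_eq.mp ((isOrtho_orthogonal_left K).mono_right inf_le_left),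
    sup_orthogonal_sup_inf_orthogonal hRK, ⟨(quotientEquivInfOrthogonal hRK).symm⟩⟩

open ComplexInnerProductSpace in
/-- Kodaira decomposition for a Hilbert complex (stated in a fixed degree):
given closed densely defined operators `d₀ : H₀ → H₁`, `d₁ : H₁ → H₂` with
`range d₀ ⊆ dom d₁`, `d₁ ∘ d₀ = 0`, closed ranges and finite dimensional cohomology,
the middle Hilbert space decomposes orthogonally as
`H₁ = closure (range d₀) ⊕ closure (range d₁*) ⊕ (ker d₁ ∩ ker d₀*)`, and the third
(harmonic) summand is isomorphic to the cohomology `ker d₁ / range d₀`. -/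
theorem kodaira_decomposition
    {H₀ H₁ H₂ : Type*}
    [NormedAddCommGroup H₀] [InnerProductSpace ℂ H₀] [CompleteSpace H₀]
    [NormedAddCommGroup H₁] [InnerProductSpace ℂ H₁] [CompleteSpace H₁]
    [NormedAddCommGroup H₂] [InnerProductSpace ℂ H₂] [CompleteSpace H₂]
    (d₀ : H₀ →ₗ.[ℂ] H₁) (d₁ : H₁ →ₗ.[ℂ] H₂)
    (hdense₀ : Dense (d₀.domain : Set H₀)) (hdense₁ : Dense (d₁.domain : Set H₁))
    (hclosed₀ : d₀.IsClosed) (hclosed₁ : d₁.IsClosed)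
    (hmem : ∀ x : d₀.domain, d₀ x ∈ d₁.domain)
    (hcomplex : ∀ x : d₀.domain, d₁ ⟨d₀ x, hmem x⟩ = 0)
    (hrange₀ : IsClosed ((LinearMap.range d₀.toFun : Submodule ℂ H₁) : Set H₁))
    (hrange₁ : IsClosed ((LinearMap.range d₁.toFun : Submodule ℂ H₂) : Set H₂))
    (hfin : FiniteDimensional ℂ
      (↥((LinearMap.ker d₁.toFun).map d₁.domain.subtype) ⧸
        ((LinearMap.range d₀.toFun).comap
          ((LinearMap.ker d₁.toFun).map d₁.domain.subtype).subtype))) :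
    -- the three summands are pairwise orthogonal:
    (∀ x ∈ (LinearMap.range d₀.toFun).topologicalClosure,
      ∀ y ∈ (LinearMap.range d₁.adjoint.toFun).topologicalClosure, ⟪x, y⟫ = 0) ∧
    (∀ x ∈ (LinearMap.range d₀.toFun).topologicalClosure,
      ∀ y ∈ ((LinearMap.ker d₁.toFun).map d₁.domain.subtype ⊓
              (LinearMap.ker d₀.adjoint.toFun).map d₀.adjoint.domain.subtype :
              Submodule ℂ H₁), ⟪x, y⟫ = 0) ∧
    (∀ x ∈ (LinearMap.range d₁.adjoint.toFun).topologicalClosure,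
      ∀ y ∈ ((LinearMap.ker d₁.toFun).map d₁.domain.subtype ⊓
              (LinearMap.ker d₀.adjoint.toFun).map d₀.adjoint.domain.subtype :
              Submodule ℂ H₁), ⟪x, y⟫ = 0) ∧
    -- they span all of `H₁`:
    ((LinearMap.range d₀.toFun).topologicalClosure ⊔
      (LinearMap.range d₁.adjoint.toFun).topologicalClosure ⊔
      ((LinearMap.ker d₁.toFun).map d₁.domain.subtype ⊓
        (LinearMap.ker d₀.adjoint.toFun).map d₀.adjoint.domain.subtype) = ⊤) ∧
    -- the harmonic summand is isomorphic to the cohomology `ker d₁ / range d₀`: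
    Nonempty
      ((↥((LinearMap.ker d₁.toFun).map d₁.domain.subtype ⊓
          (LinearMap.ker d₀.adjoint.toFun).map d₀.adjoint.domain.subtype)) ≃ₗ[ℂ]
        (↥((LinearMap.ker d₁.toFun).map d₁.domain.subtype) ⧸
          ((LinearMap.range d₀.toFun).comap
            ((LinearMap.ker d₁.toFun).map d₁.domain.subtype).subtype))) :=
  kodaira_decomposition_general d₀ d₁ hdense₀ hdense₁ hclosed₁ hmem hcomplex hrange₀
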